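/- arXiv:1610.03142 — 4 statements merged into one kernel-verified Lean document; each statement's English description precedes it below -/
import Mathlib

section
/- Every biangular unit-norm tight frame is equidistributed: if F = {f_1, ..., f_n} is a unit-norm tight frame for F^m whose frame angle set is {alpha_1, alpha_2} with alpha_1 not equal to alpha_2, then there exist positive integers tau_1 and tau_2 such that for every j in {1, ..., n} and every l in {1, 2}, the number of indices j' not equal to j with |<f_j, f_{j'}>| = alpha_l equals tau_l; moreover tau_1 * alpha_1^2 + tau_2 * alpha_2^2 = (n - m)/m and tau_1 + tau_2 = n - 1. -/
open Finset
open scoped InnerProductSpace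

/-!
Pairing the tight-frame identity `∑ j, ⟪f j, v⟫ f j = a v` with `v` gives
`∑ j, |⟪f j, v⟫|² = a ‖v‖²`. At `v = f i` this reads `∑_{j ≠ i} |⟪f i, f j⟫|² = a - 1`, and
summed over an orthonormal basis it gives `a m = n`. When only the two values `α₁ ≠ α₂` occur
off the diagonal, the two counts `τ₁(i), τ₂(i)` of each row satisfy the linear system
`τ₁ + τ₂ = n - 1`, `τ₁ α₁² + τ₂ α₂² = a - 1`, whose determinant `α₂² - α₁²` is nonzero, so the
counts do not depend on the row.
-/

section TightFrame

variable {𝕜 E ι : Type*} [RCLike 𝕜] [NormedAddCommGroup E] [InnerProductSpace 𝕜 E] [Fintype ι]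
  {f : ι → E} {a : ℝ}

theorem sum_sq_norm_inner_of_tight (h_tight : ∀ v, ∑ j, ⟪f j, v⟫_𝕜 • f j = (a : 𝕜) • v)
    (v : E) : ∑ j, ‖⟪f j, v⟫_𝕜‖ ^ 2 = a * ‖v‖ ^ 2 := by
  have h := congrArg (inner 𝕜 v) (h_tight v)
  simp only [inner_sum, inner_smul_right, inner_self_eq_norm_sq_to_K] at h
  have h_term : ∀ j, ⟪f j, v⟫_𝕜 * ⟪v, f j⟫_𝕜 = (‖⟪f j, v⟫_𝕜‖ ^ 2 : ℝ) := by
    intro j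
    rw [← inner_conj_symm v (f j), RCLike.mul_conj]
    push_cast; rfl
  simp only [h_term] at h
  exact_mod_cast h

theorem mul_finrank_eq_sum_sq_norm_of_tight [FiniteDimensional 𝕜 E]
    (h_tight : ∀ v, ∑ j, ⟪f j, v⟫_𝕜 • f j = (a : 𝕜) • v) :
    a * Module.finrank 𝕜 E = ∑ j, ‖f j‖ ^ 2 := by
  let b := stdOrthonormalBasis 𝕜 E
  calc a * Module.finrank 𝕜 E = ∑ k, a * ‖b k‖ ^ 2 := by
        rw [sum_congr rfl fun k _ => by rw [b.orthonormal.1 k, one_pow, mul_one], sum_const,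
          card_univ, Fintype.card_fin, nsmul_eq_mul, mul_comm]
    _ = ∑ k, ∑ j, ‖⟪f j, b k⟫_𝕜‖ ^ 2 := by
        simp only [sum_sq_norm_inner_of_tight h_tight]
    _ = ∑ j, ‖f j‖ ^ 2 := by
        rw [sum_comm]
        simp only [b.sum_sq_norm_inner_left]

theorem sum_erase_sq_norm_inner_of_tight_of_norm_eq_one [DecidableEq ι]
    (h_tight : ∀ v, ∑ j, ⟪f j, v⟫_𝕜 • f j = (a : 𝕜) • v) (h_norm : ∀ j, ‖f j‖ = 1)
    (i : ι) : ∑ j ∈ univ.erase i, ‖⟪f i, f j⟫_𝕜‖ ^ 2 = a - 1 := by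
  have h := sum_sq_norm_inner_of_tight h_tight (f i)
  simp only [norm_inner_symm (f _) (f i), h_norm, one_pow, mul_one] at h
  rw [← add_sum_erase _ _ (mem_univ i), inner_self_eq_norm_sq_to_K, h_norm] at h
  simp only [norm_pow, RCLike.norm_ofReal, one_pow, abs_one] at h
  linarith

end TightFrame

theorem Finset.sum_eq_card_smul_add_card_smul_of_two_valued {ι β M : Type*} [DecidableEq β]
    [AddCommMonoid M] {s : Finset ι} {g : ι → β} {b₁ b₂ : β} (hb : b₁ ≠ b₂)
    (hg : ∀ x ∈ s, g x = b₁ ∨ g x = b₂) (φ : β → M) :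
    ∑ x ∈ s, φ (g x) = #{x ∈ s | g x = b₁} • φ b₁ + #{x ∈ s | g x = b₂} • φ b₂ := by
  have h_compl : {x ∈ s | ¬g x = b₁} = {x ∈ s | g x = b₂} := by
    refine filter_congr fun x hx => ?_
    rcases hg x hx with h | h <;> simp [h, hb, hb.symm]
  have h_part : ∀ b, ∑ x ∈ s with g x = b, φ (g x) = #{x ∈ s | g x = b} • φ b := fun b => by
    rw [sum_congr rfl fun x hx => congrArg φ (mem_filter.1 hx).2, sum_const]
  rw [← sum_filter_add_sum_filter_not s (g · = b₁), h_compl, h_part, h_part]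

theorem eq_and_eq_of_add_eq_of_mul_add_mul_eq {c₁ c₂ d₁ d₂ : ℕ} {x₁ x₂ : ℝ} (hx : x₁ ≠ x₂)
    (h_sum : c₁ + c₂ = d₁ + d₂) (h_weighted : c₁ * x₁ + c₂ * x₂ = d₁ * x₁ + d₂ * x₂) :
    c₁ = d₁ ∧ c₂ = d₂ := by
  have h_sum' : (c₁ : ℝ) + c₂ = d₁ + d₂ := by exact_mod_cast h_sum
  have h : ((c₁ : ℝ) - d₁) * (x₁ - x₂) = 0 := by linear_combination h_weighted - x₂ * h_sum'
  have h₁ : c₁ = d₁ := by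
    exact_mod_cast sub_eq_zero.1 ((mul_eq_zero.1 h).resolve_right (sub_ne_zero.2 hx))
  exact ⟨h₁, by omega⟩

section BiangularFrame

variable {𝕜 E ι : Type*} [RCLike 𝕜] [NormedAddCommGroup E] [InnerProductSpace 𝕜 E] [Fintype ι]
  [DecidableEq ι] {f : ι → E} {a α₁ α₂ : ℝ}

variable (𝕜) in
noncomputable def angleMultiplicity (f : ι → E) (j : ι) (α : ℝ) : ℕ :=
  #{j' ∈ univ.erase j | ‖⟪f j, f j'⟫_𝕜‖ = α}

theorem natCard_eq_angleMultiplicity (j : ι) (α : ℝ) :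
    Nat.card {j' : ι | j' ≠ j ∧ ‖⟪f j, f j'⟫_𝕜‖ = α} = angleMultiplicity 𝕜 f j α := by
  rw [Nat.card_eq_fintype_card, Fintype.card_subtype, angleMultiplicity]
  congr 1
  ext
  simp

theorem angleMultiplicity_pos {j j' : ι} (h : j ≠ j') :
    0 < angleMultiplicity 𝕜 f j ‖⟪f j, f j'⟫_𝕜‖ :=
  card_pos.2 ⟨j', mem_filter.2 ⟨mem_erase.2 ⟨h.symm, mem_univ _⟩, rfl⟩⟩

variable (h_two : ∀ j j', j ≠ j' → ‖⟪f j, f j'⟫_𝕜‖ = α₁ ∨ ‖⟪f j, f j'⟫_𝕜‖ = α₂)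
include h_two

theorem angleMultiplicity_add_angleMultiplicity (h_ne : α₁ ≠ α₂) (j : ι) :
    angleMultiplicity 𝕜 f j α₁ + angleMultiplicity 𝕜 f j α₂ = Fintype.card ι - 1 := by
  have h := sum_eq_card_smul_add_card_smul_of_two_valued (s := univ.erase j) h_ne
    (fun j' hj' => h_two j j' (ne_of_mem_erase hj').symm) fun _ => (1 : ℕ)
  simp only [sum_const, smul_eq_mul, mul_one, card_erase_of_mem (mem_univ j), card_univ] at h
  exact h.symm

theorem angleMultiplicity_mul_sq_add_angleMultiplicity_mul_sq (h_ne : α₁ ≠ α₂)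
    (h_tight : ∀ v, ∑ j, ⟪f j, v⟫_𝕜 • f j = (a : 𝕜) • v) (h_norm : ∀ j, ‖f j‖ = 1) (j : ι) :
    angleMultiplicity 𝕜 f j α₁ * α₁ ^ 2 + angleMultiplicity 𝕜 f j α₂ * α₂ ^ 2 = a - 1 := by
  have h := sum_eq_card_smul_add_card_smul_of_two_valued (s := univ.erase j) h_ne
    (fun j' hj' => h_two j j' (ne_of_mem_erase hj').symm) (· ^ 2 : ℝ → ℝ)
  rw [sum_erase_sq_norm_inner_of_tight_of_norm_eq_one h_tight h_norm, nsmul_eq_mul,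
    nsmul_eq_mul] at h
  exact h.symm

theorem angleMultiplicity_eq_of_tight (h_sq_ne : α₁ ^ 2 ≠ α₂ ^ 2)
    (h_tight : ∀ v, ∑ j, ⟪f j, v⟫_𝕜 • f j = (a : 𝕜) • v) (h_norm : ∀ j, ‖f j‖ = 1) (j k : ι) :
    angleMultiplicity 𝕜 f j α₁ = angleMultiplicity 𝕜 f k α₁ ∧
      angleMultiplicity 𝕜 f j α₂ = angleMultiplicity 𝕜 f k α₂ := by
  have h_ne : α₁ ≠ α₂ := fun h => h_sq_ne (by rw [h])
  exact eq_and_eq_of_add_eq_of_mul_add_mul_eq h_sq_ne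
    ((angleMultiplicity_add_angleMultiplicity h_two h_ne j).trans
      (angleMultiplicity_add_angleMultiplicity h_two h_ne k).symm)
    ((angleMultiplicity_mul_sq_add_angleMultiplicity_mul_sq h_two h_ne h_tight h_norm j).trans
      (angleMultiplicity_mul_sq_add_angleMultiplicity_mul_sq h_two h_ne h_tight h_norm k).symm)

end BiangularFrame

theorem statement1_general {𝕜 : Type*} [RCLike 𝕜] {m n : ℕ}
    (f : Fin n → EuclideanSpace 𝕜 (Fin m)) (a : ℝ) (α₁ α₂ : ℝ)
    (h_norm : ∀ j, ‖f j‖ = 1)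
    (h_tight : ∀ v : EuclideanSpace 𝕜 (Fin m),
      ∑ j, (inner 𝕜 (f j) v : 𝕜) • f j = (a : 𝕜) • v)
    (h_angles : {r : ℝ | ∃ j j', j ≠ j' ∧ ‖(inner 𝕜 (f j) (f j') : 𝕜)‖ = r} = {α₁, α₂})
    (h_ne : α₁ ≠ α₂) :
    ∃ τ₁ τ₂ : ℕ, 0 < τ₁ ∧ 0 < τ₂ ∧
      (∀ j, Nat.card {j' : Fin n | j' ≠ j ∧ ‖(inner 𝕜 (f j) (f j') : 𝕜)‖ = α₁} = τ₁) ∧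
      (∀ j, Nat.card {j' : Fin n | j' ≠ j ∧ ‖(inner 𝕜 (f j) (f j') : 𝕜)‖ = α₂} = τ₂) ∧
      (τ₁ : ℝ) * α₁ ^ 2 + (τ₂ : ℝ) * α₂ ^ 2 = ((n : ℝ) - m) / m ∧
      τ₁ + τ₂ = n - 1 := by
  have h_two : ∀ j j', j ≠ j' → ‖⟪f j, f j'⟫_𝕜‖ = α₁ ∨ ‖⟪f j, f j'⟫_𝕜‖ = α₂ :=
    fun j j' h => by simpa using h_angles.subset ⟨j, j', h, rfl⟩
  obtain ⟨j₁, j₁', hj₁, rfl⟩ : α₁ ∈ {r : ℝ | ∃ j j', j ≠ j' ∧ ‖⟪f j, f j'⟫_𝕜‖ = r} := by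
    simp [h_angles]
  obtain ⟨j₂, j₂', hj₂, rfl⟩ : α₂ ∈ {r : ℝ | ∃ j j', j ≠ j' ∧ ‖⟪f j, f j'⟫_𝕜‖ = r} := by
    simp [h_angles]
  have h_sq_ne : ‖⟪f j₁, f j₁'⟫_𝕜‖ ^ 2 ≠ ‖⟪f j₂, f j₂'⟫_𝕜‖ ^ 2 := by
    rwa [Ne, sq_eq_sq₀ (norm_nonneg _) (norm_nonneg _)]
  have h_const := angleMultiplicity_eq_of_tight h_two h_sq_ne h_tight h_norm
  have h_dim : a * m = n := by
    simpa [h_norm] using mul_finrank_eq_sum_sq_norm_of_tight h_tight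
  have hm : (m : ℝ) ≠ 0 := by
    rintro hm
    rw [hm, mul_zero, eq_comm, Nat.cast_eq_zero] at h_dim
    exact (Fin.pos j₁).ne' h_dim
  refine ⟨_, _, angleMultiplicity_pos hj₁, (h_const j₁ j₂).2 ▸ angleMultiplicity_pos hj₂,
    fun j => (natCard_eq_angleMultiplicity j _).trans (h_const j j₁).1,
    fun j => (natCard_eq_angleMultiplicity j _).trans (h_const j j₁).2, ?_,
    by simpa using angleMultiplicity_add_angleMultiplicity h_two h_ne j₁⟩
  rw [angleMultiplicity_mul_sq_add_angleMultiplicity_mul_sq h_two h_ne h_tight h_norm j₁,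
    eq_div_iff hm]
  linarith

/-- Every biangular unit-norm tight frame is equidistributed: if
`F = {f_1, ..., f_n}` is a unit-norm `a`-tight frame for `𝔽^m` whose frame angle set is
`{α₁, α₂}` with `α₁ ≠ α₂`, then there exist positive integers `τ₁, τ₂` such that for every
`j` and `l ∈ {1,2}` the number of `j' ≠ j` with `|⟨f_j, f_{j'}⟩| = α_l` equals `τ_l`;
moreover `τ₁ α₁² + τ₂ α₂² = (n-m)/m` and `τ₁ + τ₂ = n - 1`. -/
theorem statement1 {𝕜 : Type*} [RCLike 𝕜] {m n : ℕ}
    (f : Fin n → EuclideanSpace 𝕜 (Fin m)) (a : ℝ) (α₁ α₂ : ℝ)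
    (h_span : Submodule.span 𝕜 (Set.range f) = ⊤)
    (h_norm : ∀ j, ‖f j‖ = 1)
    (h_tight : ∀ v : EuclideanSpace 𝕜 (Fin m),
      ∑ j, (inner 𝕜 (f j) v : 𝕜) • f j = (a : 𝕜) • v)
    (h_angles : {r : ℝ | ∃ j j', j ≠ j' ∧ ‖(inner 𝕜 (f j) (f j') : 𝕜)‖ = r} = {α₁, α₂})
    (h_ne : α₁ ≠ α₂) :
    ∃ τ₁ τ₂ : ℕ, 0 < τ₁ ∧ 0 < τ₂ ∧
      (∀ j, Nat.card {j' : Fin n | j' ≠ j ∧ ‖(inner 𝕜 (f j) (f j') : 𝕜)‖ = α₁} = τ₁) ∧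
      (∀ j, Nat.card {j' : Fin n | j' ≠ j ∧ ‖(inner 𝕜 (f j) (f j') : 𝕜)‖ = α₂} = τ₂) ∧
      (τ₁ : ℝ) * α₁ ^ 2 + (τ₂ : ℝ) * α₂ ^ 2 = ((n : ℝ) - m) / m ∧
      τ₁ + τ₂ = n - 1 :=
  statement1_general f a α₁ α₂ h_norm h_tight h_angles h_ne
end

section
/- If F = {f_x}_{x in G} is the G-harmonic frame for C^m generated by S = {g_1, ..., g_m}, then its G-modulation operators are pairwise Hilbert-Schmidt orthogonal: <X_xi, X_eta>_{H.S.} = 0 for all xi, eta in G with xi not equal to eta. -/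
open Finset

/-- The underlying finite abelian group `G = ZMod n₁ ⊕ ... ⊕ ZMod n_k`
(a fixed cyclic decomposition). -/
abbrev PiG {k : ℕ} (nn : Fin k → ℕ) : Type := ∀ i, ZMod (nn i)

/-- The character `ρ_x(y) = exp(2πi (x(1)y(1)/n₁ + ... + x(k)y(k)/n_k))`. -/
noncomputable def rho {k : ℕ} (nn : Fin k → ℕ) (x y : PiG nn) : ℂ :=
  Complex.exp (2 * (Real.pi : ℂ) * Complex.I *
    ∑ i, ((x i).val : ℂ) * ((y i).val : ℂ) / ((nn i : ℕ) : ℂ))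

/-- The vector `f_x = (1/√m) (ρ_{g_j}(x))_{j=1}^m` of the `G`-harmonic frame
generated by `S = {g_1, ..., g_m}`, as a function `Fin m → ℂ`. -/
noncomputable def harmFun {k m : ℕ} (nn : Fin k → ℕ) (g : Fin m → PiG nn) (x : PiG nn) :
    Fin m → ℂ :=
  fun j => ((Real.sqrt m : ℝ) : ℂ)⁻¹ * rho nn (g j) x

/-- The `ξ`-th `G`-modulation operator `X_ξ = ∑_x ρ_ξ(x) f_x ⊗ f_x^*` of the harmonic
frame, as an `m × m` matrix with entries `(X_ξ)_{a,b} = ∑_x ρ_ξ(x) f_x(a) conj(f_x(b))`. -/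
noncomputable def modOp {k m : ℕ} (nn : Fin k → ℕ) [∀ i, NeZero (nn i)]
    (g : Fin m → PiG nn) (ξ : PiG nn) : Matrix (Fin m) (Fin m) ℂ :=
  ∑ x : PiG nn, rho nn ξ x •
    Matrix.vecMulVec (harmFun nn g x) (fun b => (starRingEnd ℂ) (harmFun nn g x b))

/-- The primitive `n`-th root of unity `exp(2πi/n)`. -/
noncomputable def zet (n : ℕ) : ℂ := Complex.exp (2 * (Real.pi : ℂ) * Complex.I / n)

lemma zet_pow_self (n : ℕ) (hn : n ≠ 0) : zet n ^ n = 1 := by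
  rw [zet, ← Complex.exp_nat_mul, mul_div_cancel₀ _ (by exact_mod_cast hn),
    Complex.exp_two_pi_mul_I]

lemma zet_pow_mod (n : ℕ) (hn : n ≠ 0) (a : ℕ) : zet n ^ a = zet n ^ (a % n) := by
  conv_lhs => rw [← Nat.mod_add_div a n]
  rw [pow_add, pow_mul, zet_pow_self n hn, one_pow, mul_one]

lemma zet_pow_congr (n : ℕ) (hn : n ≠ 0) {a b : ℕ} (h : a ≡ b [MOD n]) :
    zet n ^ a = zet n ^ b := by
  rw [zet_pow_mod n hn a, zet_pow_mod n hn b, h]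

lemma rho_eq_prod {k : ℕ} (nn : Fin k → ℕ) (x y : PiG nn) :
    rho nn x y = ∏ i, zet (nn i) ^ ((x i).val * (y i).val) := by
  rw [rho, Finset.mul_sum, Complex.exp_sum]
  refine Finset.prod_congr rfl fun i _ => ?_
  rw [zet, ← Complex.exp_nat_mul]
  congr 1
  push_cast
  ring

lemma rho_add_left {k : ℕ} (nn : Fin k → ℕ) [∀ i, NeZero (nn i)] (x y z : PiG nn) :
    rho nn (x + y) z = rho nn x z * rho nn y z := by
  simp only [rho_eq_prod, ← Finset.prod_mul_distrib]
  refine Finset.prod_congr rfl fun i _ => ?_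
  rw [← pow_add, ← add_mul]
  refine zet_pow_congr _ (NeZero.ne _) (Nat.ModEq.mul_right _ ?_)
  show (x i + y i).val ≡ _ [MOD nn i]
  rw [ZMod.val_add]
  exact Nat.mod_modEq _ _

lemma rho_zero_left {k : ℕ} (nn : Fin k → ℕ) (z : PiG nn) : rho nn 0 z = 1 := by
  simp [rho_eq_prod, ZMod.val_zero]

lemma rho_conj {k : ℕ} (nn : Fin k → ℕ) [∀ i, NeZero (nn i)] (x z : PiG nn) :
    (starRingEnd ℂ) (rho nn x z) = rho nn (-x) z := by
  have h1 : rho nn (-x) z * rho nn x z = 1 := by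
    rw [← rho_add_left, neg_add_cancel, rho_zero_left]
  have h2 : rho nn (-x) z = (rho nn x z)⁻¹ := eq_inv_of_mul_eq_one_left h1
  rw [h2, rho, ← Complex.exp_conj, ← Complex.exp_neg]
  congr 1
  simp only [map_mul, map_sum, map_div₀, map_ofNat, Complex.conj_I, Complex.conj_ofReal,
    Complex.conj_natCast]
  ring

lemma zmod_sum (n : ℕ) [NeZero n] (w : ZMod n) (hw : w ≠ 0) :
    ∑ z : ZMod n, zet n ^ (w.val * (z : ZMod n).val) = 0 := by
  have hn := NeZero.ne n
  have hprim : IsPrimitiveRoot (zet n) n := Complex.isPrimitiveRoot_exp n hn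
  set ω := zet n ^ w.val with hω
  have hω1 : ω ≠ 1 := by
    intro h
    have hd : n ∣ w.val := (hprim.pow_eq_one_iff_dvd _).mp h
    have hlt : w.val < n := ZMod.val_lt w
    have hne0 : w.val ≠ 0 := fun h0 => hw (by
      have := ZMod.val_cast_of_lt (Nat.pos_of_ne_zero hn)
      exact (ZMod.val_eq_zero w).mp h0)
    exact absurd (Nat.le_of_dvd (Nat.pos_of_ne_zero hne0) hd) (not_le_of_gt hlt)
  have hωn : ω ^ n = 1 := by
    rw [hω, ← pow_mul, mul_comm, pow_mul, zet_pow_self n hn, one_pow]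
  have key : ∑ z : ZMod n, zet n ^ (w.val * (z : ZMod n).val) = ∑ t ∈ Finset.range n, ω ^ t := by
    refine Finset.sum_nbij' (i := fun z => (z : ZMod n).val) (j := fun t => (t : ZMod n))
      ?_ ?_ ?_ ?_ ?_
    · intro a _; exact Finset.mem_range.mpr (ZMod.val_lt a)
    · intro t _; exact Finset.mem_univ _
    · intro a _; exact ZMod.natCast_rightInverse a
    · intro t ht; exact ZMod.val_cast_of_lt (Finset.mem_range.mp ht)
    · intro a _; rw [pow_mul]
  rw [key, geom_sum_eq hω1, hωn, sub_self, zero_div]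

lemma rho_sum {k : ℕ} (nn : Fin k → ℕ) [∀ i, NeZero (nn i)] (w : PiG nn) (hw : w ≠ 0) :
    ∑ z : PiG nn, rho nn w z = 0 := by
  classical
  simp only [rho_eq_prod]
  rw [← Fintype.prod_sum (fun i (j : ZMod (nn i)) => zet (nn i) ^ ((w i).val * j.val))]
  obtain ⟨i0, hi0⟩ : ∃ i, w i ≠ 0 := by
    by_contra h
    push_neg at h
    exact hw (funext h)
  exact Finset.prod_eq_zero (Finset.mem_univ i0) (zmod_sum _ _ hi0)

lemma modOp_apply {k m : ℕ} (nn : Fin k → ℕ) [∀ i, NeZero (nn i)]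
    (g : Fin m → PiG nn) (ξ : PiG nn) (a b : Fin m) (hξ : ξ + g a - g b ≠ 0) :
    modOp nn g ξ a b = 0 := by
  have hcalc : ∀ x : PiG nn,
      rho nn ξ x * (rho nn (g a) x * (starRingEnd ℂ) (rho nn (g b) x)) =
        rho nn (ξ + g a - g b) x := by
    intro x
    rw [rho_conj, sub_eq_add_neg, rho_add_left, rho_add_left]
    ring
  simp only [modOp, Matrix.sum_apply, Matrix.smul_apply, Matrix.vecMulVec_apply, harmFun,
    smul_eq_mul, map_mul, Complex.conj_inv, Complex.conj_ofReal]
  have : ∀ x : PiG nn,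
      rho nn ξ x * (((Real.sqrt m : ℝ) : ℂ)⁻¹ * rho nn (g a) x *
        (((Real.sqrt m : ℝ) : ℂ)⁻¹ * (starRingEnd ℂ) (rho nn (g b) x))) =
      ((Real.sqrt m : ℝ) : ℂ)⁻¹ * ((Real.sqrt m : ℝ) : ℂ)⁻¹ * rho nn (ξ + g a - g b) x := by
    intro x
    rw [← hcalc x]
    ring
  rw [Finset.sum_congr rfl fun x _ => this x, ← Finset.mul_sum, rho_sum nn _ hξ, mul_zero]

/-- If `F = {f_x}` is the `G`-harmonic frame for `ℂ^m` generated by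
`S = {g_1, ..., g_m}`, then its `G`-modulation operators are pairwise Hilbert–Schmidt
orthogonal: `⟨X_ξ, X_η⟩_{H.S.} = trace(X_ξ X_η^*) = 0` for all `ξ ≠ η`. -/
theorem statement6 {k m : ℕ} (nn : Fin k → ℕ) [∀ i, NeZero (nn i)] (hm : 0 < m)
    (g : Fin m → PiG nn) (hg : Function.Injective g) (ξ η : PiG nn) (hne : ξ ≠ η) :
    (modOp nn g ξ * (modOp nn g η).conjTranspose).trace = 0 := by
  rw [Matrix.trace]
  refine Finset.sum_eq_zero fun a _ => ?_
  rw [Matrix.diag_apply, Matrix.mul_apply]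
  refine Finset.sum_eq_zero fun b _ => ?_
  rw [Matrix.conjTranspose_apply]
  by_cases h : ξ + g a - g b = 0
  · have hη : η + g a - g b ≠ 0 := by
      intro h'
      have h1 : ξ + g a = g b := sub_eq_zero.mp h
      have h2 : η + g a = g b := sub_eq_zero.mp h'
      exact hne (add_right_cancel (h1.trans h2.symm))
    rw [modOp_apply nn g η a b hη, star_zero, mul_zero]
  · rw [modOp_apply nn g ξ a b h, zero_mul]
end

section
/- If F = {f_x}_{x in G} is the G-harmonic frame for C^m generated by an (n, m, l, lambda, mu)-bidifference set S = {g_1, ..., g_m} for G relative to A, then for every x, y in G with x not equal to y one has m^2 * |<f_x, f_y>|^2 = (m - lambda) + (lambda - mu) * sum_{xi in A} rho_{y-x}(xi). -/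
/-! Since `ρ` is symmetric, `m ⟨f_x, f_y⟩ = ∑_j ψ(g_j)` for the additive character
`ψ = ρ_{y-x}`. Expanding `|∑_j ψ(g_j)|²` over ordered pairs gives `m + ∑_ξ d(ξ) ψ(ξ)`, where `d(ξ)`
counts the representations `ξ = g_a - g_b` with `a ≠ b`. For a bidifference set `d` is `λ` on
`A \ {0}`, `μ` off `A`, and `0` at `0`; as `x ≠ y`, `ψ` is nontrivial, so `∑_ξ ψ(ξ) = 0` and the
sum collapses to `(λ - μ) ∑_{ξ ∈ A} ψ(ξ) - λ`. -/

open Finset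

/-- The vector `f_x = (1/√m) (ρ_{g_j}(x))_{j=1}^m` of the `G`-harmonic frame
generated by `S = {g_1, ..., g_m}`. -/
noncomputable def harm {k m : ℕ} (nn : Fin k → ℕ) (g : Fin m → PiG nn) (x : PiG nn) :
    EuclideanSpace ℂ (Fin m) :=
  (WithLp.equiv 2 (Fin m → ℂ)).symm fun j => ((Real.sqrt m : ℝ) : ℂ)⁻¹ * rho nn (g j) x

/-- The frame angle `|⟨f_x, f_y⟩|`. -/
noncomputable def ang {k m : ℕ} (nn : Fin k → ℕ) (g : Fin m → PiG nn) (x y : PiG nn) : ℝ :=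
  ‖(inner ℂ (harm nn g x) (harm nn g y) : ℂ)‖

/-- The set of frame angles `Θ = { |⟨f_x, f_y⟩| : x ≠ y }` of the harmonic frame. -/
noncomputable def anglesSet {k m : ℕ} (nn : Fin k → ℕ) (g : Fin m → PiG nn) : Set ℝ :=
  {r : ℝ | ∃ x y : PiG nn, x ≠ y ∧ ang nn g x y = r}

/-- The harmonic frame is a tight frame (with the forced constant `n/m`):
`∑_x f_x ⊗ f_x^* = (n/m) I_m` as operators. -/
noncomputable def IsTightHarm {k m : ℕ} (nn : Fin k → ℕ) [∀ i, NeZero (nn i)]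
    (g : Fin m → PiG nn) : Prop :=
  ∀ v : EuclideanSpace ℂ (Fin m),
    ∑ x : PiG nn, (inner ℂ (harm nn g x) v : ℂ) • harm nn g x =
      ((Fintype.card (PiG nn) : ℂ) / (m : ℂ)) • v

/-- `diffCount g x` is the number of ways to write `x = g_a - g_b` with `g_a ≠ g_b`
distinct elements of `S = {g_1, ..., g_m}`. -/
noncomputable def diffCount {G : Type*} [AddCommGroup G] {m : ℕ} (g : Fin m → G) (x : G) : ℕ :=
  Nat.card {p : Fin m × Fin m // p.1 ≠ p.2 ∧ g p.1 - g p.2 = x}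

lemma rho_comm {k : ℕ} (nn : Fin k → ℕ) (x y : PiG nn) : rho nn x y = rho nn y x := by
  simp only [rho, mul_comm ((x _).val : ℂ)]

section Characters

variable {k : ℕ} (nn : Fin k → ℕ) [∀ i, NeZero (nn i)]

noncomputable def rhoChar (a : PiG nn) : AddChar (PiG nn) ℂ :=
  ∏ i, ZMod.stdAddChar.compAddMonoidHom
    ((AddMonoidHom.mulLeft (a i)).comp (Pi.evalAddMonoidHom (fun i ↦ ZMod (nn i)) i))

lemma rhoChar_apply (a ξ : PiG nn) : rhoChar nn a ξ = ∏ i, ZMod.stdAddChar (a i * ξ i) := by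
  simp [rhoChar, AddChar.prod_apply]

-- The products `(a i).val * (ξ i).val` in `rho` may be reduced mod `nn i`, since `exp (2πi t / n)`
-- only depends on `t mod n`; this is what makes `rho nn a` additive.
lemma coe_rhoChar (a : PiG nn) : ⇑(rhoChar nn a) = rho nn a := by
  ext ξ
  rw [rhoChar_apply, rho, mul_sum, Complex.exp_sum]
  refine prod_congr rfl fun i _ ↦ ?_
  have hval : a i * ξ i = (((a i).val * (ξ i).val : ℕ) : ZMod (nn i)) := by simp
  rw [hval, ZMod.stdAddChar_apply, ZMod.toCircle_natCast]
  push_cast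
  ring_nf

lemma rhoChar_ne_zero {z : PiG nn} (hz : z ≠ 0) : rhoChar nn z ≠ 0 := by
  obtain ⟨i₀, hi₀⟩ : ∃ i, z i ≠ 0 := Function.ne_iff.1 hz
  refine AddChar.ne_zero_iff.2 ⟨Pi.single i₀ 1, ?_⟩
  rw [rhoChar_apply, Fintype.prod_eq_single i₀ fun i hi ↦ by simp [hi], Pi.single_eq_same,
    mul_one, Ne, ← AddChar.map_zero_eq_one (ZMod.stdAddChar (N := nn i₀)),
    ZMod.injective_stdAddChar.eq_iff]
  exact hi₀

end Characters

section DifferenceCounts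

variable {G : Type*} [AddCommGroup G] [DecidableEq G] {m : ℕ} (g : Fin m → G)

lemma diffCount_eq_card (ξ : G) :
    diffCount g ξ = #{p ∈ (univ : Finset (Fin m)).offDiag | g p.1 - g p.2 = ξ} := by
  rw [diffCount, Nat.card_eq_fintype_card, Fintype.card_subtype]
  congr 1
  ext p
  simp

lemma diffCount_zero (hg : Function.Injective g) : diffCount g 0 = 0 := by
  simp [diffCount_eq_card, sub_eq_zero, hg.eq_iff]

variable [Fintype G]

lemma sum_offDiag_sub_eq_sum_diffCount {M : Type*} [AddCommMonoid M] (f : G → M) :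
    ∑ p ∈ (univ : Finset (Fin m)).offDiag, f (g p.1 - g p.2) = ∑ ξ, diffCount g ξ • f ξ := by
  rw [← sum_fiberwise univ.offDiag (fun p ↦ g p.1 - g p.2)]
  refine sum_congr rfl fun ξ _ ↦ ?_
  rw [sum_congr rfl fun p hp ↦ by rw [(mem_filter.1 hp).2], sum_const,
    diffCount_eq_card]

lemma sq_norm_sum_addChar (ψ : AddChar G ℂ) :
    ((‖∑ j, ψ (g j)‖ : ℝ) : ℂ) ^ 2 = m + ∑ ξ, (diffCount g ξ : ℂ) * ψ ξ := by
  have hpair : ∀ a b, ψ (g a) * (starRingEnd ℂ) (ψ (g b)) = ψ (g a - g b) := by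
    intro a b
    rw [← AddChar.map_neg_eq_conj, ← AddChar.map_add_eq_mul, sub_eq_add_neg]
  rw [← Complex.mul_conj', map_sum, sum_mul_sum, ← sum_product',
    ← diag_union_offDiag, sum_union (disjoint_diag_offDiag _),
    sum_diag]
  simp only [hpair, sub_self, AddChar.map_zero_eq_one, sum_const, card_univ,
    Fintype.card_fin, nsmul_eq_mul, mul_one, sum_offDiag_sub_eq_sum_diffCount]

lemma sum_diffCount_mul_addChar_of_bidifference {ψ : AddChar G ℂ} (hψ : ψ ≠ 0)
    (hg : Function.Injective g) {A : Finset G} {lam mu : ℕ} (h0A : 0 ∈ A)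
    (hlam : ∀ x ∈ A, x ≠ 0 → diffCount g x = lam) (hmu : ∀ x, x ∉ A → diffCount g x = mu) :
    ∑ ξ, (diffCount g ξ : ℂ) * ψ ξ = (lam - mu) * ∑ ξ ∈ A, ψ ξ - lam := by
  have hcount : ∀ ξ, (diffCount g ξ : ℂ) * ψ ξ =
      (lam - mu) * (if ξ ∈ A then ψ ξ else 0) + mu * ψ ξ - lam * (if ξ = 0 then ψ ξ else 0) := by
    intro ξ
    by_cases hξ : ξ = 0
    · simp [hξ, h0A, diffCount_zero g hg]
    by_cases hξA : ξ ∈ A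
    · simp only [hξ, hξA, hlam ξ hξA hξ, if_true, if_false]
      ring
    · simp [hξ, hξA, hmu ξ hξA]
  simp only [hcount, sum_sub_distrib, sum_add_distrib, ← mul_sum,
    sum_ite_mem, univ_inter, sum_ite_eq', mem_univ, if_true,
    AddChar.sum_eq_zero_iff_ne_zero.2 hψ, AddChar.map_zero_eq_one]
  ring

end DifferenceCounts

lemma inner_harm {k m : ℕ} (nn : Fin k → ℕ) [∀ i, NeZero (nn i)] (g : Fin m → PiG nn)
    (x y : PiG nn) :
    inner ℂ (harm nn g x) (harm nn g y) = (m : ℂ)⁻¹ * ∑ j, rho nn (g j) (y - x) := by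
  have hscale : (starRingEnd ℂ) ((Real.sqrt m : ℝ) : ℂ)⁻¹ * ((Real.sqrt m : ℝ) : ℂ)⁻¹ =
      (m : ℂ)⁻¹ := by
    rw [map_inv₀, Complex.conj_ofReal, ← mul_inv, ← Complex.ofReal_mul,
      Real.mul_self_sqrt m.cast_nonneg, Complex.ofReal_natCast]
  have hchar : ∀ a, (starRingEnd ℂ) (rho nn a x) * rho nn a y = rho nn a (y - x) := by
    intro a
    rw [← coe_rhoChar, ← AddChar.map_neg_eq_conj, ← AddChar.map_add_eq_mul, neg_add_eq_sub]
  rw [PiLp.inner_apply, mul_sum]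
  refine sum_congr rfl fun j _ ↦ ?_
  simp only [harm, WithLp.equiv_symm_apply, RCLike.inner_apply, map_mul]
  rw [← hchar, ← hscale]
  ring

lemma ang_eq_norm_sum_div {k m : ℕ} (nn : Fin k → ℕ) [∀ i, NeZero (nn i)] (g : Fin m → PiG nn)
    (x y : PiG nn) : ang nn g x y = ‖∑ j, rho nn (g j) (y - x)‖ / m := by
  rw [ang, inner_harm, norm_mul, norm_inv, Complex.norm_natCast, inv_mul_eq_div]

theorem statement9_general {k m : ℕ} (nn : Fin k → ℕ) [∀ i, NeZero (nn i)] (hm : 0 < m)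
    (g : Fin m → PiG nn) (hg : Function.Injective g)
    (A : Finset (PiG nn)) (lam mu : ℕ)
    (h0A : (0 : PiG nn) ∈ A)
    (hlam : ∀ x ∈ A, x ≠ 0 → diffCount g x = lam)
    (hmu : ∀ x : PiG nn, x ∉ A → diffCount g x = mu)
    (x y : PiG nn) (hxy : x ≠ y) :
    ((m : ℂ)) ^ 2 * ((ang nn g x y : ℝ) : ℂ) ^ 2 =
      ((m : ℂ) - (lam : ℂ)) + ((lam : ℂ) - (mu : ℂ)) * ∑ ξ ∈ A, rho nn (y - x) ξ := by
  set ψ := rhoChar nn (y - x)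
  have hψ : ψ ≠ 0 := rhoChar_ne_zero nn (sub_ne_zero.2 hxy.symm)
  have hsum : ∑ j, rho nn (g j) (y - x) = ∑ j, ψ (g j) :=
    sum_congr rfl fun j _ ↦ by rw [coe_rhoChar, rho_comm]
  have hm' : (m : ℂ) ≠ 0 := Nat.cast_ne_zero.2 hm.ne'
  calc (m : ℂ) ^ 2 * ((ang nn g x y : ℝ) : ℂ) ^ 2 = ((‖∑ j, ψ (g j)‖ : ℝ) : ℂ) ^ 2 := by
        rw [ang_eq_norm_sum_div, hsum]
        push_cast
        field_simp
    _ = m + ∑ ξ, (diffCount g ξ : ℂ) * ψ ξ := sq_norm_sum_addChar g ψ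
    _ = (m - lam) + (lam - mu) * ∑ ξ ∈ A, rho nn (y - x) ξ := by
        rw [sum_diffCount_mul_addChar_of_bidifference g hψ hg h0A hlam hmu, coe_rhoChar]
        ring

/-- If `F = {f_x}` is the `G`-harmonic frame for `ℂ^m` generated by an
`(n, m, l, λ, μ)`-bidifference set `S = {g_1, ..., g_m}` for `G` relative to `A`, then for
all `x ≠ y` one has `m² |⟨f_x, f_y⟩|² = (m - λ) + (λ - μ) ∑_{ξ ∈ A} ρ_{y-x}(ξ)`. -/
theorem statement9 {k m : ℕ} (nn : Fin k → ℕ) [∀ i, NeZero (nn i)] (hm : 0 < m)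
    (g : Fin m → PiG nn) (hg : Function.Injective g)
    (A : Finset (PiG nn)) (l lam mu : ℕ)
    (h0A : (0 : PiG nn) ∈ A) (hl : A.card = l)
    (hlam : ∀ x ∈ A, x ≠ 0 → diffCount g x = lam)
    (hmu : ∀ x : PiG nn, x ∉ A → diffCount g x = mu)
    (x y : PiG nn) (hxy : x ≠ y) :
    ((m : ℂ)) ^ 2 * ((ang nn g x y : ℝ) : ℂ) ^ 2 =
      ((m : ℂ) - (lam : ℂ)) + ((lam : ℂ) - (mu : ℂ)) * ∑ ξ ∈ A, rho nn (y - x) ξ :=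
  statement9_general nn hm g hg A lam mu h0A hlam hmu x y hxy
end

section
/- Let p be a prime of the form p = 8q + 5 with q > 0. Then there exist nonnegative integers lambda and mu with lambda + mu = q such that the set R^{(4)}_p of quartic residues is a (p, (p-1)/4, lambda, mu)-Gaussian difference set for Z_p, and R^{(4)}_p union {0} is a (p, (p+3)/4, lambda + 1, mu)-Gaussian difference set for Z_p. -/
/-- The set `R⁽²⁾_p = { z² : z ∈ (ZMod p)* }` of quadratic residues mod `p`. -/
def quadRes (p : ℕ) : Set (ZMod p) := {x | ∃ z : ZMod p, z ≠ 0 ∧ z ^ 2 = x}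

/-- The set `R⁽⁴⁾_p = { z⁴ : z ∈ (ZMod p)* }` of quartic residues mod `p`. -/
def quartRes (p : ℕ) : Set (ZMod p) := {x | ∃ z : ZMod p, z ≠ 0 ∧ z ^ 4 = x}

/-- `diffCountSet S x` is the number of ways to write `x = a - b` with `a ≠ b` distinct
elements of `S`. -/
noncomputable def diffCountSet {G : Type*} [AddCommGroup G] (S : Set G) (x : G) : ℕ :=
  Nat.card {q : G × G // q.1 ∈ S ∧ q.2 ∈ S ∧ q.1 ≠ q.2 ∧ q.1 - q.2 = x}

/-- `S` is a `(p, |S|, λ, μ)`-Gaussian difference set for `ZMod p`: every nonzero element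
of `R⁽²⁾_p ∪ {0}` is a difference of distinct elements of `S` in exactly `λ` ways, and
every element outside `R⁽²⁾_p ∪ {0}` in exactly `μ` ways. -/
def IsGaussianDS (p : ℕ) (S : Set (ZMod p)) (lam mu : ℕ) : Prop :=
  (∀ x ∈ insert (0 : ZMod p) (quadRes p), x ≠ 0 → diffCountSet S x = lam) ∧
  (∀ x : ZMod p, x ∉ insert (0 : ZMod p) (quadRes p) → diffCountSet S x = mu)

/-!
Since `p ≡ 5 (mod 8)`, `-1` is a square but not a fourth power, so the nonzero squares are
`R⁽⁴⁾ ⊔ -R⁽⁴⁾`. The number of ways to write `x` as a difference of two elements of `R⁽⁴⁾` is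
invariant under `x ↦ -x` and under multiplication by fourth powers, hence it is a constant `λ` on
the nonzero squares and a constant `μ` on the nonsquares. Counting all ordered pairs of distinct
elements of `R⁽⁴⁾` gives `(p - 1)/2 · (λ + μ) = n (n - 1)` with `n = (p - 1)/4 = 2q + 1`, so
`λ + μ = q`. Adjoining `0` adds, for `x ≠ 0`, the pair `(x, 0)` when `x ∈ R⁽⁴⁾` and `(0, -x)` when
`-x ∈ R⁽⁴⁾`: exactly one of them for a square `x`, none for a nonsquare.
-/

open Finset

section DiffCount

variable {G : Type*} [AddCommGroup G]

theorem diffCountSet_zero (S : Set G) : diffCountSet S 0 = 0 := by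
  rw [diffCountSet, Nat.card_eq_zero]
  exact .inl ⟨fun ⟨_, _, _, hne, h⟩ => hne (sub_eq_zero.mp h)⟩

theorem diffCountSet_map (e : G ≃+ G) {S : Set G} (hS : ∀ s, e s ∈ S ↔ s ∈ S) (x : G) :
    diffCountSet S (e x) = diffCountSet S x := by
  refine (Nat.card_congr (Equiv.subtypeEquiv (e.toEquiv.prodCongr e.toEquiv) fun q => ?_)).symm
  simp [hS, ← map_sub, e.injective.eq_iff]

theorem diffCountSet_neg (S : Set G) (x : G) : diffCountSet S (-x) = diffCountSet S x := by
  refine Nat.card_congr (Equiv.subtypeEquiv (Equiv.prodComm G G) fun q => ?_)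
  simp only [Equiv.prodComm_apply, Prod.fst_swap, Prod.snd_swap]
  rw [← neg_sub, neg_inj, ne_comm]
  tauto

variable [Fintype G] [DecidableEq G]

theorem diffCountSet_coe_eq_card_offDiag (S : Finset G) (x : G) :
    diffCountSet (S : Set G) x = #{q ∈ S.offDiag | q.1 - q.2 = x} := by
  rw [diffCountSet, Nat.card_eq_fintype_card, Fintype.card_subtype]
  congr 1
  ext q
  simp [and_assoc]

theorem sum_diffCountSet (S : Finset G) : ∑ x, diffCountSet (S : Set G) x = #S * #S - #S := by
  simp_rw [diffCountSet_coe_eq_card_offDiag, ← offDiag_card]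
  exact (card_eq_sum_card_fiberwise fun _ _ => mem_univ _).symm

theorem diffCountSet_coe_eq_card_filter_sub_mem (S : Finset G) {x : G} (hx : x ≠ 0) :
    diffCountSet (S : Set G) x = #{a ∈ S | a - x ∈ S} := by
  rw [diffCountSet_coe_eq_card_offDiag]
  refine card_nbij' Prod.fst (fun a => (a, a - x)) ?_ ?_ ?_ (fun _ _ => rfl) <;>
    simp only [Set.MapsTo, Set.LeftInvOn, coe_filter, mem_offDiag, Set.mem_ofPred_eq]
  · rintro q ⟨⟨h1, h2, -⟩, rfl⟩
    simpa using ⟨h1, h2⟩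
  · rintro a ⟨h1, h2⟩
    exact ⟨⟨h1, h2, fun h => hx (sub_eq_self.mp h.symm)⟩, sub_sub_cancel _ _⟩
  · rintro q ⟨-, rfl⟩
    simp

theorem diffCountSet_insert_zero {S : Finset G} (h0 : 0 ∉ S) {x : G} (hx : x ≠ 0) :
    diffCountSet (insert 0 (S : Set G)) x =
      diffCountSet (S : Set G) x + (if x ∈ S then 1 else 0) + (if -x ∈ S then 1 else 0) := by
  have hS : ∀ a ∈ S, (if a - x ∈ insert 0 S then 1 else 0) =
      (if a - x ∈ S then 1 else 0) + (if a = x then 1 else 0) := by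
    intro a _
    by_cases hax : a = x
    · subst hax
      simp [h0]
    · simp [hax, sub_eq_zero]
  rw [← coe_insert, diffCountSet_coe_eq_card_filter_sub_mem _ hx,
    diffCountSet_coe_eq_card_filter_sub_mem _ hx, card_filter, card_filter, sum_insert h0,
    sum_congr rfl hS, sum_add_distrib, sum_ite_eq']
  simp [hx, add_comm]

end DiffCount

theorem ncard_setOf_pow_eq {F : Type*} [Field F] [Fintype F] {n : ℕ}
    (hn : n ∣ Fintype.card F - 1) :
    {x : F | ∃ z, z ≠ 0 ∧ z ^ n = x}.ncard = (Fintype.card F - 1) / n := by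
  classical
  have hset : {x : F | ∃ z, z ≠ 0 ∧ z ^ n = x} =
      Units.val '' ((powMonoidHom n : Fˣ →* Fˣ).range : Set Fˣ) := by
    ext x
    simp only [Set.mem_ofPred_eq, Set.mem_image, SetLike.mem_coe, MonoidHom.mem_range,
      powMonoidHom_apply]
    constructor
    · rintro ⟨z, hz, rfl⟩
      exact ⟨Units.mk0 z hz ^ n, ⟨_, rfl⟩, by simp⟩
    · rintro ⟨_, ⟨u, rfl⟩, rfl⟩
      exact ⟨u, u.ne_zero, by simp⟩
  rw [hset, Set.ncard_image_of_injective _ Units.val_injective, ← Nat.card_coe_set_eq,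
    SetLike.coe_sort_coe, IsCyclic.card_powMonoidHom_range, Nat.card_eq_fintype_card,
    Fintype.card_units, Nat.gcd_eq_right hn]

theorem isSquare_mul_of_not_isSquare {F : Type*} [Field F] [Fintype F] [DecidableEq F]
    {a b : F} (ha : ¬IsSquare a) (hb : ¬IsSquare b) : IsSquare (a * b) := by
  have hne : ∀ {c : F}, ¬IsSquare c → c ≠ 0 := fun hc h => hc (h ▸ IsSquare.zero)
  rw [← quadraticChar_one_iff_isSquare (mul_ne_zero (hne ha) (hne hb)), map_mul,
    quadraticChar_neg_one_iff_not_isSquare.mpr ha, quadraticChar_neg_one_iff_not_isSquare.mpr hb]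
  norm_num

section Residues

variable {p : ℕ} [Fact p.Prime]

theorem mem_quadRes_iff {x : ZMod p} : x ∈ quadRes p ↔ x ≠ 0 ∧ IsSquare x := by
  constructor
  · rintro ⟨z, hz, rfl⟩
    exact ⟨pow_ne_zero 2 hz, z, sq z⟩
  · rintro ⟨hx, z, rfl⟩
    exact ⟨z, fun h => hx (by simp [h]), sq z⟩

theorem ne_zero_of_mem_quartRes {x : ZMod p} (hx : x ∈ quartRes p) : x ≠ 0 := by
  obtain ⟨z, hz, rfl⟩ := hx
  exact pow_ne_zero 4 hz

theorem zero_notMem_quartRes : (0 : ZMod p) ∉ quartRes p :=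
  fun h => ne_zero_of_mem_quartRes h rfl

theorem mul_mem_quartRes_iff {t s : ZMod p} (ht : t ∈ quartRes p) :
    t * s ∈ quartRes p ↔ s ∈ quartRes p := by
  obtain ⟨z, hz, rfl⟩ := ht
  constructor
  · rintro ⟨w, hw, hws⟩
    refine ⟨w / z, div_ne_zero hw hz, ?_⟩
    rw [div_pow, hws, mul_div_cancel_left₀ _ (pow_ne_zero 4 hz)]
  · rintro ⟨w, hw, rfl⟩
    exact ⟨z * w, mul_ne_zero hz hw, mul_pow z w 4⟩

theorem quartRes_subset_quadRes : quartRes p ⊆ quadRes p := by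
  rintro x ⟨z, hz, rfl⟩
  exact ⟨z ^ 2, pow_ne_zero 2 hz, by ring⟩

theorem ncard_quadRes (hp : p % 2 = 1) : (quadRes p).ncard = (p - 1) / 2 := by
  have h := ncard_setOf_pow_eq (F := ZMod p) (n := 2) (by rw [ZMod.card]; omega)
  rwa [ZMod.card] at h

theorem ncard_quartRes (hp : p % 4 = 1) : (quartRes p).ncard = (p - 1) / 4 := by
  have h := ncard_setOf_pow_eq (F := ZMod p) (n := 4) (by rw [ZMod.card]; omega)
  rwa [ZMod.card] at h

theorem neg_one_notMem_quartRes (hp : p % 8 = 5) : (-1 : ZMod p) ∉ quartRes p := by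
  rintro ⟨z, hz, hz4⟩
  obtain ⟨k, hk⟩ : ∃ k, p - 1 = 4 * (2 * k + 1) := ⟨p / 8, by omega⟩
  have := ZMod.pow_card_sub_one_eq_one hz
  rw [hk, pow_mul, hz4, (odd_two_mul_add_one k).neg_one_pow] at this
  exact Ring.neg_one_ne_one_of_char_ne_two (by rw [ZMod.ringChar_zmod_n]; omega) this

theorem neg_notMem_quartRes (hp : p % 8 = 5) {x : ZMod p} (hx : x ∈ quartRes p) :
    -x ∉ quartRes p := by
  rw [← mul_neg_one, mul_mem_quartRes_iff hx]
  exact neg_one_notMem_quartRes hp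

theorem mem_quadRes_iff_mem_quartRes_or_neg (hp : p % 8 = 5) {x : ZMod p} :
    x ∈ quadRes p ↔ x ∈ quartRes p ∨ -x ∈ quartRes p := by
  obtain ⟨i, hi⟩ := ZMod.exists_sq_eq_neg_one_iff.mpr (by omega : p % 4 ≠ 3)
  have hi0 : i ≠ 0 := fun h => by simp [h] at hi
  constructor
  · rintro ⟨s, hs, rfl⟩
    by_cases hsq : IsSquare s
    · obtain ⟨v, rfl⟩ := hsq
      exact .inl ⟨v, fun h => hs (by simp [h]), by ring⟩
    · have hi_nonsq : ¬IsSquare i := by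
        rintro ⟨d, rfl⟩
        exact neg_one_notMem_quartRes hp ⟨d, fun h => by simp [h] at hi, by rw [hi]; ring⟩
      obtain ⟨w, hw⟩ := isSquare_mul_of_not_isSquare hi_nonsq hsq
      refine .inr ⟨w, fun h => ?_, ?_⟩
      · exact mul_ne_zero hi0 hs (by rw [hw, h, mul_zero])
      · rw [show w ^ 4 = (w * w) ^ 2 by ring, ← hw, mul_pow, sq i, ← hi, neg_one_mul]
  · rintro (h | h)
    · exact quartRes_subset_quadRes h
    · obtain ⟨z, hz, hzx⟩ := quartRes_subset_quadRes h
      refine ⟨i * z, mul_ne_zero hi0 hz, ?_⟩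
      rw [mul_pow, sq i, ← hi, hzx, neg_one_mul, neg_neg]

theorem diffCountSet_quartRes_mul (hp : p % 8 = 5) {t : ZMod p} (ht : t ∈ quadRes p)
    (x : ZMod p) : diffCountSet (quartRes p) (t * x) = diffCountSet (quartRes p) x := by
  have scale : ∀ u ∈ quartRes p, ∀ y,
      diffCountSet (quartRes p) (u * y) = diffCountSet (quartRes p) y := fun u hu =>
    diffCountSet_map (DistribMulAction.toAddEquiv₀ (ZMod p) u (ne_zero_of_mem_quartRes hu))
      fun _ => mul_mem_quartRes_iff hu
  rcases (mem_quadRes_iff_mem_quartRes_or_neg hp).mp ht with h | h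
  · exact scale t h x
  · rw [← neg_neg t, neg_mul, diffCountSet_neg, scale _ h]

theorem isGaussianDS_iff {S : Set (ZMod p)} {lam mu : ℕ} :
    IsGaussianDS p S lam mu ↔ (∀ x ∈ quadRes p, diffCountSet S x = lam) ∧
      ∀ x : ZMod p, x ≠ 0 → ¬IsSquare x → diffCountSet S x = mu := by
  simp only [IsGaussianDS, Set.mem_insert_iff, mem_quadRes_iff]
  exact and_congr ⟨fun h x hx => h x (.inr hx) hx.1, fun h x hx hx0 => h x (by tauto)⟩
    ⟨fun h x hx0 hsq => h x (by tauto), fun h x hx => h x (by tauto) (by tauto)⟩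

theorem exists_isGaussianDS_quartRes (hp : p % 8 = 5) :
    ∃ lam mu : ℕ, IsGaussianDS p (quartRes p) lam mu := by
  obtain ⟨ν, hν⟩ := FiniteField.exists_nonsquare (F := ZMod p)
    (by rw [ZMod.ringChar_zmod_n]; omega)
  have hν0 : ν ≠ 0 := fun h => hν (h ▸ IsSquare.zero)
  refine ⟨diffCountSet (quartRes p) 1, diffCountSet (quartRes p) ν,
    isGaussianDS_iff.mpr ⟨fun x hx => ?_, fun x hx0 hx => ?_⟩⟩
  · simpa using diffCountSet_quartRes_mul hp hx 1
  · have hsq : x / ν ∈ quadRes p := mem_quadRes_iff.mpr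
      ⟨div_ne_zero hx0 hν0, isSquare_mul_of_not_isSquare hx fun h => hν (by simpa using h.inv)⟩
    rw [← div_mul_cancel₀ x hν0, diffCountSet_quartRes_mul hp hsq]

theorem IsGaussianDS.insert_zero_quartRes (hp : p % 8 = 5) {lam mu : ℕ}
    (h : IsGaussianDS p (quartRes p) lam mu) :
    IsGaussianDS p (insert 0 (quartRes p)) (lam + 1) mu := by
  classical
  obtain ⟨hlam, hmu⟩ := isGaussianDS_iff.mp h
  have h0 : (0 : ZMod p) ∉ (quartRes p).toFinset := by
    simpa using zero_notMem_quartRes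
  rw [← Set.coe_toFinset (quartRes p)] at hlam hmu ⊢
  refine isGaussianDS_iff.mpr ⟨fun x hx => ?_, fun x hx0 hx => ?_⟩
  · rw [diffCountSet_insert_zero h0 (mem_quadRes_iff.mp hx).1, hlam x hx]
    rcases (mem_quadRes_iff_mem_quartRes_or_neg hp).mp hx with h | h
    · simp [h, neg_notMem_quartRes hp h]
    · simpa [h] using neg_notMem_quartRes hp h
  · have hneither : ¬(x ∈ quartRes p ∨ -x ∈ quartRes p) := by
      rw [← mem_quadRes_iff_mem_quartRes_or_neg hp, mem_quadRes_iff]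
      tauto
    obtain ⟨hx1, hx2⟩ := not_or.mp hneither
    rw [diffCountSet_insert_zero h0 hx0, hmu x hx0 hx]
    simp [hx1, hx2]

theorem IsGaussianDS.mul_add_eq_ncard_mul_ncard_sub (hp : p % 2 = 1) {S : Set (ZMod p)}
    {lam mu : ℕ} (h : IsGaussianDS p S lam mu) :
    (p - 1) / 2 * (lam + mu) = S.ncard * S.ncard - S.ncard := by
  classical
  obtain ⟨hlam, hmu⟩ := isGaussianDS_iff.mp h
  have hsq : #{x ∈ univ.erase (0 : ZMod p) | IsSquare x} = (p - 1) / 2 := by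
    rw [← ncard_quadRes hp, ← Set.ncard_coe_finset]
    congr
    ext x
    simp [mem_quadRes_iff]
  have hnsq : #{x ∈ univ.erase (0 : ZMod p) | ¬IsSquare x} = (p - 1) / 2 := by
    have := card_filter_add_card_filter_not (s := univ.erase (0 : ZMod p)) IsSquare
    rw [card_erase_of_mem (mem_univ _), card_univ, ZMod.card, hsq] at this
    omega
  rw [← Set.coe_toFinset S] at hlam hmu ⊢
  rw [Set.ncard_coe_finset, ← sum_diffCountSet, ← add_sum_erase _ _ (mem_univ 0),
    diffCountSet_zero, zero_add, ← sum_filter_add_sum_filter_not _ IsSquare,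
    sum_const_nat (m := lam) fun x hx => ?_, sum_const_nat (m := mu) fun x hx => ?_, hsq, hnsq,
    mul_add]
  · simp only [mem_filter, mem_erase] at hx
    exact hmu x hx.1.1 hx.2
  · simp only [mem_filter, mem_erase] at hx
    exact hlam x (mem_quadRes_iff.mpr ⟨hx.1.1, hx.2⟩)

end Residues

theorem statement16_general (p q : ℕ) (hp : p.Prime) (hpq : p = 8 * q + 5) :
    ∃ lam mu : ℕ, lam + mu = q ∧
      (quartRes p).ncard = (p - 1) / 4 ∧
      IsGaussianDS p (quartRes p) lam mu ∧
      (insert (0 : ZMod p) (quartRes p)).ncard = (p + 3) / 4 ∧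
      IsGaussianDS p (insert (0 : ZMod p) (quartRes p)) (lam + 1) mu := by
  have := Fact.mk hp
  have h8 : p % 8 = 5 := by omega
  obtain ⟨lam, mu, hDS⟩ := exists_isGaussianDS_quartRes h8
  have hcard := ncard_quartRes (p := p) (by omega)
  have hcount := hDS.mul_add_eq_ncard_mul_ncard_sub (by omega)
  have hsum : lam + mu = q := by
    rw [hcard, show (p - 1) / 4 = 2 * q + 1 by omega, show (p - 1) / 2 = 2 * (2 * q + 1) by omega,
      ← Nat.mul_sub_one, Nat.add_sub_cancel, mul_comm 2, mul_assoc] at hcount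
    have := Nat.eq_of_mul_eq_mul_left (by omega) hcount
    omega
  refine ⟨lam, mu, hsum, hcard, hDS, ?_, hDS.insert_zero_quartRes h8⟩
  rw [Set.ncard_insert_of_notMem zero_notMem_quartRes, hcard]
  omega

/-- Let `p` be a prime of the form `p = 8q + 5` with `q > 0`.  Then
there exist nonnegative integers `λ, μ` with `λ + μ = q` such that the set `R⁽⁴⁾_p` of
quartic residues is a `(p, (p-1)/4, λ, μ)`-Gaussian difference set for `ZMod p`, and
`R⁽⁴⁾_p ∪ {0}` is a `(p, (p+3)/4, λ+1, μ)`-Gaussian difference set for `ZMod p`. -/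
theorem statement16 (p q : ℕ) (hp : p.Prime) (hq : 0 < q) (hpq : p = 8 * q + 5) :
    ∃ lam mu : ℕ, lam + mu = q ∧
      (quartRes p).ncard = (p - 1) / 4 ∧
      IsGaussianDS p (quartRes p) lam mu ∧
      (insert (0 : ZMod p) (quartRes p)).ncard = (p + 3) / 4 ∧
      IsGaussianDS p (insert (0 : ZMod p) (quartRes p)) (lam + 1) mu :=
  statement16_general p q hp hpq
end
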